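/- arXiv:1609.05579 — 3 statements merged into one kernel-verified Lean document; each statement's English description precedes it below -/
import Mathlib

section
/- Let X be a δ-hyperbolic geodesic metric space and let f, g ∈ Isom(X) be dependent hyperbolic isometries, i.e. hyperbolic isometries such that the pair of attracting and repelling fixed points of f in ∂X and the pair of attracting and repelling fixed points of g in ∂X have nonempty intersection. Then there exists N ≥ 0 such that for every n ≥ N, the isometry f g^n is hyperbolic. -/
open Filter Metric Set

noncomputable section

universe u

variable {X : Type u} [MetricSpace X]

/-- The Gromov product `(x·y)_w = ½(d(x,w) + d(w,y) − d(x,y))`. -/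
def gromovProduct (w x y : X) : ℝ := (dist x w + dist w y - dist x y) / 2

/-- `γ` is a geodesic from `x` to `y`, parametrized by arc length on `[0, dist x y]`. -/
structure IsGeodesicSegment (γ : ℝ → X) (x y : X) : Prop where
  source : γ 0 = x
  target : γ (dist x y) = y
  isom : ∀ ⦃s t : ℝ⦄, s ∈ Set.Icc (0 : ℝ) (dist x y) → t ∈ Set.Icc (0 : ℝ) (dist x y) →
    dist (γ s) (γ t) = |s - t|

/-- A geodesic metric space is `δ`-hyperbolic: every pair of points is joined by a
geodesic, every geodesic triangle is `δ`-slim, every geodesic triangle has insize at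
most `δ`, and the Gromov product is `δ`-hyperbolic. -/
structure IsDeltaHyperbolic (X : Type u) [MetricSpace X] (δ : ℝ) : Prop where
  delta_nonneg : 0 ≤ δ
  geodesic : ∀ x y : X, ∃ γ : ℝ → X, IsGeodesicSegment γ x y
  slim : ∀ (x y z : X) (α β γ : ℝ → X),
    IsGeodesicSegment α y z → IsGeodesicSegment β z x → IsGeodesicSegment γ x y →
    ∀ s ∈ Set.Icc (0 : ℝ) (dist y z),
      (∃ t ∈ Set.Icc (0 : ℝ) (dist z x), dist (α s) (β t) ≤ δ) ∨
      (∃ t ∈ Set.Icc (0 : ℝ) (dist x y), dist (α s) (γ t) ≤ δ)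
  insize : ∀ (x y z : X) (α β γ : ℝ → X),
    IsGeodesicSegment α y z → IsGeodesicSegment β z x → IsGeodesicSegment γ x y →
    dist (α (gromovProduct y x z)) (β (gromovProduct z x y)) ≤ δ ∧
    dist (β (gromovProduct z x y)) (γ (gromovProduct x y z)) ≤ δ ∧
    dist (γ (gromovProduct x y z)) (α (gromovProduct y x z)) ≤ δ
  gromov : ∀ w x y z : X,
    min (gromovProduct w x y) (gromovProduct w y z) - δ ≤ gromovProduct w x z

/-- An isometry `f` of `X` is hyperbolic if for every `x ∈ X` there is `t > 0` with
`t|m − n| ≤ d(f^m x, f^n x)` for all integers `m, n`. -/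
def IsHyperbolicIsometry (f : X ≃ᵢ X) : Prop :=
  ∀ x : X, ∃ t : ℝ, 0 < t ∧
    ∀ m n : ℤ, t * |(m : ℝ) - (n : ℝ)| ≤ dist ((f ^ m) x) ((f ^ n) x)

/-- A sequence converges to infinity if the Gromov products `(x_i·x_j)_w → ∞`. -/
def ConvergesToInfinity (w : X) (u : ℕ → X) : Prop :=
  Tendsto (fun p : ℕ × ℕ => gromovProduct w (u p.1) (u p.2)) atTop atTop

/-- Two sequences are equivalent if the mixed Gromov products tend to infinity. -/
def SeqEquiv (w : X) (u v : ℕ → X) : Prop :=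
  Tendsto (fun p : ℕ × ℕ => gromovProduct w (u p.1) (v p.2)) atTop atTop

/-- Sequences converging to infinity. -/
def BoundarySeq (w : X) : Type u := {u : ℕ → X // ConvergesToInfinity w u}

/-- The Gromov boundary `∂X`: equivalence classes of sequences converging to infinity. -/
def GromovBoundary (w : X) : Type u :=
  Quot (fun u v : BoundarySeq w => SeqEquiv w u.1 v.1)

/-- The boundary point determined by a sequence converging to infinity. -/
def boundaryPt (w : X) (u : BoundarySeq w) : GromovBoundary w := Quot.mk _ u

/-- `X̄ = X ∪ ∂X`. -/
def GromovClosure (w : X) : Type u := X ⊕ GromovBoundary w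

theorem gromovProduct_basepoint_ge (w w' x y : X) :
    gromovProduct w x y - dist w w' ≤ gromovProduct w' x y := by
  have h1 : |dist w' x - dist w x| ≤ dist w' w := abs_dist_sub_le w' w x
  have h2 : |dist w' y - dist w y| ≤ dist w' w := abs_dist_sub_le w' w y
  rw [abs_le] at h1 h2
  unfold gromovProduct
  rw [dist_comm x w', dist_comm x w, dist_comm w w']
  linarith [h1.1, h1.2, h2.1, h2.2]

theorem gromovProduct_isometry (f : X ≃ᵢ X) (w x y : X) :
    gromovProduct w (f x) (f y) = gromovProduct (f.symm w) x y := by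
  unfold gromovProduct
  conv_lhs => rw [show w = f (f.symm w) from (f.apply_symm_apply w).symm]
  rw [f.dist_eq, f.dist_eq, f.dist_eq]

theorem convergesToInfinity_isometry {w : X} (f : X ≃ᵢ X) {u : ℕ → X}
    (h : ConvergesToInfinity w u) :
    ConvergesToInfinity w (fun n => f (u n)) := by
  refine tendsto_atTop_mono (fun p => ?_)
    (tendsto_atTop_add_const_right atTop (-dist w (f.symm w)) h)
  have h1 := gromovProduct_basepoint_ge w (f.symm w) (u p.1) (u p.2)
  have h2 := gromovProduct_isometry f w (u p.1) (u p.2)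
  dsimp only
  linarith

theorem seqEquiv_isometry {w : X} (f : X ≃ᵢ X) {u v : ℕ → X}
    (h : SeqEquiv w u v) :
    SeqEquiv w (fun n => f (u n)) (fun n => f (v n)) := by
  refine tendsto_atTop_mono (fun p => ?_)
    (tendsto_atTop_add_const_right atTop (-dist w (f.symm w)) h)
  have h1 := gromovProduct_basepoint_ge w (f.symm w) (u p.1) (v p.2)
  have h2 := gromovProduct_isometry f w (u p.1) (v p.2)
  dsimp only
  linarith

/-- The extension of an isometry of `X` to the Gromov boundary. -/
def boundaryMap (w : X) (f : X ≃ᵢ X) : GromovBoundary w → GromovBoundary w :=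
  Quot.lift
    (fun u : BoundarySeq w =>
      boundaryPt w ⟨fun n => f (u.1 n), convergesToInfinity_isometry f u.2⟩)
    (fun _ _ h => Quot.sound (seqEquiv_isometry f h))

/-- The extension of an isometry of `X` to `X̄ = X ∪ ∂X`. -/
def closureMap (w : X) (f : X ≃ᵢ X) : GromovClosure w → GromovClosure w
  | Sum.inl x => Sum.inl (f x)
  | Sum.inr a => Sum.inr (boundaryMap w f a)

/-- The Gromov product of a boundary point with a point of `X̄`, extended by
taking infima of liminfs over representative sequences. -/
noncomputable def boundaryGP (w : X) (a : GromovBoundary w) : GromovClosure w → ℝ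
  | Sum.inl p => sInf {r : ℝ | ∃ u : BoundarySeq w, boundaryPt w u = a ∧
      r = Filter.liminf (fun n => gromovProduct w (u.1 n) p) atTop}
  | Sum.inr b => sInf {r : ℝ | ∃ u v : BoundarySeq w, boundaryPt w u = a ∧
      boundaryPt w v = b ∧
      r = Filter.liminf (fun n => gromovProduct w (u.1 n) (v.1 n)) atTop}

/-- The basis for the topology on `X̄`: open balls in `X`, and the sets
`N(â,k) = {y : (â·y)_w > k}` for boundary points `â` and `k > 0`. -/
def closureBasis (w : X) : Set (Set (GromovClosure w)) :=
  {S | (∃ (x : X) (r : ℝ), 0 < r ∧ S = Sum.inl '' Metric.ball x r) ∨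
       (∃ (a : GromovBoundary w) (k : ℝ), 0 < k ∧ S = {y | k < boundaryGP w a y})}

/-- The topology on `X̄` generated by the basis above. -/
def closureTop (w : X) : TopologicalSpace (GromovClosure w) :=
  TopologicalSpace.generateFrom (closureBasis w)

/-- `S ⊆ X̄` is a neighborhood of `p ∈ X̄`. -/
def IsNeighborhood (w : X) (S : Set (GromovClosure w)) (p : GromovClosure w) : Prop :=
  S ∈ @nhds (GromovClosure w) (closureTop w) p

/-- `a ∈ ∂X` is the attracting fixed point of `f`: it is represented by the
sequence `(f^n x)` for a point `x ∈ X`. -/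
def IsAttractingFixedPt (w : X) (f : X ≃ᵢ X) (a : GromovBoundary w) : Prop :=
  ∃ (x : X) (h : ConvergesToInfinity w (fun n : ℕ => (f ^ (n : ℤ)) x)),
    boundaryPt w ⟨fun n : ℕ => (f ^ (n : ℤ)) x, h⟩ = a

/-- `a ∈ ∂X` is the repelling fixed point of `f`: the attracting fixed point of `f⁻¹`. -/
def IsRepellingFixedPt (w : X) (f : X ≃ᵢ X) (a : GromovBoundary w) : Prop :=
  IsAttractingFixedPt w f⁻¹ a

/-- The concatenation `α · (f α)` of a path `α` defined on `[0, L]` with its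
image under `f`, parametrized on `[0, 2L]`. -/
noncomputable def concatPath (f : X ≃ᵢ X) (α : ℝ → X) (L : ℝ) : ℝ → X :=
  fun s => if s ≤ L then α s else f (α (s - L))

/-!
The orbit `i ↦ hⁱ x` of an isometry `h` is a chain whose Gromov products at the vertices all
equal `(h⁻¹x · hx)_x`. Once the step `d(x, hx)` exceeds twice this product by `4δ + 1`, the
four-point condition propagates along the chain: `d(x, hⁿx)` grows linearly and
`(h⁻ⁿx · hⁿx)_x` stays bounded.

For `h = f gⁿ` the step `d(w, hw)` grows linearly in `n`, so it remains to bound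
`(h⁻¹w · hw)_w`. If it were unbounded, `f gⁿ w` and `g⁻ⁿ f⁻¹ w` would converge to the
same boundary point, i.e. `f B₊ = B₋`. As `f` fixes a point of `{B₊, B₋}` and acts
injectively on `∂X`, this forces `B₊ = B₋`, which is impossible: by Fekete's lemma some power
`g^Q` spans a chain, and then `(g⁻ⁿw · gⁿw)_w` is bounded along multiples of `Q`.
-/

theorem gromovProduct_nonneg (w x y : X) : 0 ≤ gromovProduct w x y := by
  have := dist_triangle x w y
  unfold gromovProduct; linarith

theorem gromovProduct_comm (w x y : X) : gromovProduct w x y = gromovProduct w y x := by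
  unfold gromovProduct
  rw [dist_comm x w, dist_comm w y, dist_comm x y]; ring

@[simp]
theorem gromovProduct_self_left (x y : X) : gromovProduct x x y = 0 := by
  simp [gromovProduct]

theorem gromovProduct_add_gromovProduct (x y z : X) :
    gromovProduct x y z + gromovProduct y x z = dist x y := by
  unfold gromovProduct
  rw [dist_comm y x, dist_comm x z]; ring

theorem gromovProduct_le_add_dist (w x y x' y' : X) :
    gromovProduct w x y ≤ gromovProduct w x' y' + dist x x' + dist y y' := by
  have h1 := dist_triangle x x' w
  have h2 := dist_triangle w y' y
  have h3 := dist_triangle4 x' x y y'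
  rw [dist_comm y' y] at h2
  rw [dist_comm x' x] at h3
  unfold gromovProduct; linarith

@[simp]
theorem gromovProduct_map (e : X ≃ᵢ X) (w x y : X) :
    gromovProduct (e w) (e x) (e y) = gromovProduct w x y := by
  simp only [gromovProduct, e.dist_eq]

variable (X) in
def FourPointCondition (δ : ℝ) : Prop :=
  ∀ w x y z : X, min (gromovProduct w x y) (gromovProduct w y z) - δ ≤ gromovProduct w x z

namespace FourPointCondition

variable {δ : ℝ}

theorem nonneg (hX : FourPointCondition X δ) (x : X) : 0 ≤ δ := by
  simpa using hX x x x x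

theorem le_gromovProduct (hX : FourPointCondition X δ) {M : ℝ} {w x y z : X}
    (hxy : M ≤ gromovProduct w x y) (hyz : M ≤ gromovProduct w y z) :
    M - δ ≤ gromovProduct w x z :=
  (sub_le_sub_right (le_min hxy hyz) δ).trans (hX w x y z)

theorem le_or_le (hX : FourPointCondition X δ) (w x y z : X) :
    gromovProduct w x y ≤ gromovProduct w x z + δ ∨
      gromovProduct w y z ≤ gromovProduct w x z + δ :=
  min_le_iff.mp (sub_le_iff_le_add.mp (hX w x y z))

end FourPointCondition

theorem IsDeltaHyperbolic.fourPointCondition {δ : ℝ} (hX : IsDeltaHyperbolic X δ) :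
    FourPointCondition X δ :=
  hX.gromov

structure IsGromovChain (δ K L : ℝ) (y : ℤ → X) : Prop where
  gromovProduct_pred_succ_le : ∀ i, gromovProduct (y i) (y (i - 1)) (y (i + 1)) ≤ K
  le_dist_succ : ∀ i, L ≤ dist (y i) (y (i + 1))
  two_mul_add_le : 2 * K + 4 * δ + 1 ≤ L

namespace IsGromovChain

variable {δ K L : ℝ} {y : ℤ → X}

theorem comp_neg (hy : IsGromovChain δ K L y) : IsGromovChain δ K L (fun i => y (-i)) where
  gromovProduct_pred_succ_le i := by
    have := hy.gromovProduct_pred_succ_le (-i)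
    rwa [gromovProduct_comm, ← neg_add', neg_add_eq_sub, ← neg_sub] at this
  le_dist_succ i := by
    have := hy.le_dist_succ (-i - 1)
    rwa [sub_add_cancel, dist_comm, ← neg_add'] at this
  two_mul_add_le := hy.two_mul_add_le

theorem gromovProduct_succ_le (hX : FourPointCondition X δ) (hy : IsGromovChain δ K L y)
    {i j : ℤ} (hij : i ≤ j) : gromovProduct (y j) (y i) (y (j + 1)) ≤ K + δ := by
  induction j, hij using Int.leInduction with
  | base =>
    have := hy.gromovProduct_pred_succ_le 0
    simp only [gromovProduct_self_left]
    linarith [gromovProduct_nonneg (y 0) (y (0 - 1)) (y (0 + 1)), hX.nonneg (y 0)]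
  | succ j hij ih =>
    have hback : L - (K + δ) ≤ gromovProduct (y (j + 1)) (y j) (y i) := by
      have := gromovProduct_add_gromovProduct (y (j + 1)) (y j) (y i)
      rw [gromovProduct_comm (y j), dist_comm] at this
      linarith [hy.le_dist_succ j]
    have hnext := hy.gromovProduct_pred_succ_le (j + 1)
    rw [add_sub_cancel_right] at hnext
    rcases hX.le_or_le (y (j + 1)) (y j) (y i) (y (j + 1 + 1)) with h | h
    · linarith [hy.two_mul_add_le, hX.nonneg (y i)]
    · linarith

theorem dist_add_le (hX : FourPointCondition X δ) (hy : IsGromovChain δ K L y) {i j : ℤ}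
    (hij : i ≤ j) : dist (y i) (y j) + (L - 2 * (K + δ)) ≤ dist (y i) (y (j + 1)) := by
  have h := hy.gromovProduct_succ_le hX hij
  unfold gromovProduct at h
  linarith [hy.le_dist_succ j, dist_comm (y i) (y j)]

theorem mul_le_dist (hX : FourPointCondition X δ) (hy : IsGromovChain δ K L y) (i : ℤ)
    (n : ℕ) : n * (L - 2 * (K + δ)) ≤ dist (y i) (y (i + n)) := by
  induction n with
  | zero => simp
  | succ n ih =>
    have := hy.dist_add_le hX (i := i) (j := i + n) (by omega)
    push_cast
    rw [← add_assoc]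
    linarith

theorem gromovProduct_le (hX : FourPointCondition X δ) (hy : IsGromovChain δ K L y) {i j k : ℤ}
    (hij : i ≤ j) (hjk : j < k) : gromovProduct (y j) (y i) (y k) ≤ K + 2 * δ := by
  have hforward := hy.gromovProduct_succ_le hX hij
  have hbackward := hy.comp_neg.gromovProduct_succ_le hX (i := -k) (j := -(j + 1)) (by omega)
  rw [show -(-(j + 1) + 1) = j by ring, neg_neg, neg_neg, gromovProduct_comm] at hbackward
  have hfar : L - (K + δ) ≤ gromovProduct (y j) (y k) (y (j + 1)) := by
    have := gromovProduct_add_gromovProduct (y j) (y (j + 1)) (y k)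
    rw [gromovProduct_comm (y j)] at this
    linarith [hy.le_dist_succ j]
  rcases hX.le_or_le (y j) (y i) (y k) (y (j + 1)) with h | h
  · linarith
  · linarith [hy.two_mul_add_le, hX.nonneg (y i)]

end IsGromovChain

theorem dist_zpow_apply_zpow_apply (f : X ≃ᵢ X) (x : X) (m n : ℤ) :
    dist ((f ^ m) x) ((f ^ n) x) = dist x ((f ^ (n - m).natAbs) x) := by
  have hshift : (f ^ n) x = (f ^ m) ((f ^ (n - m)) x) := by
    rw [← IsometryEquiv.mul_apply, ← zpow_add, add_sub_cancel]
  rw [hshift, (f ^ m).dist_eq]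
  obtain ⟨k, hk | hk⟩ := Int.eq_nat_or_neg (n - m) <;> rw [hk]
  · simp
  · rw [Int.natAbs_neg, Int.natAbs_natCast, zpow_neg, zpow_natCast,
      ← (f ^ k).dist_eq, IsometryEquiv.apply_inv_self, dist_comm]

theorem subadditive_dist_pow_apply (f : X ≃ᵢ X) (x : X) :
    Subadditive fun n => dist x ((f ^ n) x) := by
  intro m n
  dsimp only
  rw [pow_add, IsometryEquiv.mul_apply, ← (f ^ m).dist_eq x ((f ^ n) x)]
  exact dist_triangle _ _ _

theorem isHyperbolicIsometry_iff (f : X ≃ᵢ X) :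
    IsHyperbolicIsometry f ↔ ∀ x, ∃ t > 0, ∀ n : ℕ, t * n ≤ dist x ((f ^ n) x) := by
  refine forall_congr' fun x => exists_congr fun t => and_congr_right fun _ =>
    ⟨fun h n => ?_, fun h m n => ?_⟩
  · simpa [dist_zpow_apply_zpow_apply] using h 0 n
  · have := h (n - m).natAbs
    rwa [Nat.cast_natAbs, Int.cast_abs, Int.cast_sub, ← abs_sub_comm,
      ← dist_zpow_apply_zpow_apply] at this

theorem isHyperbolicIsometry_of_mul_le_dist (f : X ≃ᵢ X) (x₀ : X) {t : ℝ} (ht : 0 < t)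
    (h : ∀ n : ℕ, t * n ≤ dist x₀ ((f ^ n) x₀)) : IsHyperbolicIsometry f := by
  refine (isHyperbolicIsometry_iff f).2 fun x => ⟨t / 2, by positivity, fun n => ?_⟩
  rcases Nat.eq_zero_or_pos n with rfl | hn
  · simp
  obtain ⟨M, hM⟩ := exists_nat_ge (4 * dist x x₀ / t)
  have hMt : 4 * dist x x₀ ≤ t * (M + 1) := by
    rw [div_le_iff₀ ht] at hM
    linarith
  have hcompare : ∀ k, dist x₀ ((f ^ k) x₀) ≤ dist x ((f ^ k) x) + 2 * dist x x₀ := by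
    intro k
    have := dist_triangle4 x₀ x ((f ^ k) x) ((f ^ k) x₀)
    rw [(f ^ k).dist_eq, dist_comm x₀ x] at this
    linarith
  -- Iterating `M + 1` times makes the error `2 * dist x x₀` negligible.
  have hiterate : dist x ((f ^ ((M + 1) * n)) x) ≤ (M + 1 : ℕ) * dist x ((f ^ n) x) := by
    simpa using (subadditive_dist_pow_apply f x).apply_mul_add_le (M + 1) n 0
  have hlower := (h ((M + 1) * n)).trans (hcompare _)
  have hn' : (1 : ℝ) ≤ n := by exact_mod_cast hn
  push_cast at hiterate hlower
  have hMn : t * (M + 1) ≤ t * ((M + 1) * n) :=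
    mul_le_mul_of_nonneg_left (le_mul_of_one_le_right (by positivity) hn') ht.le
  have hscaled : (M + 1) * (t / 2 * n) ≤ (M + 1) * dist x ((f ^ n) x) := by linarith
  exact le_of_mul_le_mul_left hscaled (by positivity)

theorem two_mul_gromovProduct_inv_apply (f : X ≃ᵢ X) (x : X) :
    2 * gromovProduct x (f⁻¹ x) (f x) = 2 * dist x (f x) - dist x ((f ^ 2) x) := by
  have h1 : dist (f⁻¹ x) x = dist x (f x) := by
    rw [← f.dist_eq, IsometryEquiv.apply_inv_self, dist_comm]
  have h2 : dist (f⁻¹ x) (f x) = dist x ((f ^ 2) x) := by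
    rw [← f.dist_eq, IsometryEquiv.apply_inv_self, sq, IsometryEquiv.mul_apply]
  rw [gromovProduct, h1, h2]
  ring

theorem isGromovChain_zpow_apply {δ : ℝ} (f : X ≃ᵢ X) (x : X)
    (hlarge : 2 * gromovProduct x (f⁻¹ x) (f x) + 4 * δ + 1 ≤ dist x (f x)) :
    IsGromovChain δ (gromovProduct x (f⁻¹ x) (f x)) (dist x (f x))
      fun i : ℤ => (f ^ i) x where
  gromovProduct_pred_succ_le i := by
    rw [zpow_sub_one, zpow_add_one, IsometryEquiv.mul_apply, IsometryEquiv.mul_apply,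
      gromovProduct_map]
  le_dist_succ i := by
    rw [zpow_add_one, IsometryEquiv.mul_apply, (f ^ i).dist_eq]
  two_mul_add_le := hlarge

theorem isHyperbolicIsometry_of_two_mul_gromovProduct_le {δ : ℝ} (hX : FourPointCondition X δ)
    (f : X ≃ᵢ X) (x : X)
    (hlarge : 2 * gromovProduct x (f⁻¹ x) (f x) + 4 * δ + 1 ≤ dist x (f x)) :
    IsHyperbolicIsometry f := by
  refine isHyperbolicIsometry_of_mul_le_dist f x
    (t := dist x (f x) - 2 * (gromovProduct x (f⁻¹ x) (f x) + δ)) (by linarith [hX.nonneg x])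
    fun n => ?_
  rw [mul_comm]
  simpa using (isGromovChain_zpow_apply f x hlarge).mul_le_dist hX 0 n

theorem gromovProduct_inv_pow_apply_le {δ : ℝ} (hX : FourPointCondition X δ) (f : X ≃ᵢ X)
    (x : X) (hlarge : 2 * gromovProduct x (f⁻¹ x) (f x) + 4 * δ + 1 ≤ dist x (f x)) {n : ℕ}
    (hn : 0 < n) :
    gromovProduct x ((f ^ n)⁻¹ x) ((f ^ n) x) ≤ gromovProduct x (f⁻¹ x) (f x) + 2 * δ := by
  simpa using (isGromovChain_zpow_apply f x hlarge).gromovProduct_le hX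
    (i := -n) (j := 0) (k := n) (by omega) (by omega)

open scoped Topology in
theorem Subadditive.tendsto_apply_two_mul_sub {u : ℕ → ℝ} (hu : Subadditive u)
    (hbdd : BddBelow (Set.range fun n => u n / n)) (hpos : 0 < hu.lim) :
    Tendsto (fun n => u (2 * n) - u n) atTop atTop := by
  have hlim := hu.tendsto_lim hbdd
  have hdouble : Tendsto (fun n : ℕ => 2 * (u (2 * n) / (2 * n : ℕ)) - u n / n) atTop
      (𝓝 hu.lim) := by
    have := ((hlim.comp (tendsto_id.const_mul_atTop' two_pos)).const_mul 2).sub hlim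
    rwa [show 2 * hu.lim - hu.lim = hu.lim by ring] at this
  refine (tendsto_natCast_atTop_atTop.atTop_mul_pos hpos hdouble).congr' ?_
  filter_upwards [eventually_ne_atTop 0] with n hn
  push_cast
  field_simp

theorem IsHyperbolicIsometry.not_tendsto_gromovProduct_pow_inv_pow {δ : ℝ}
    (hX : FourPointCondition X δ) {g : X ≃ᵢ X} (hg : IsHyperbolicIsometry g) (x : X) :
    ¬ Tendsto (fun n : ℕ => gromovProduct x ((g ^ n) x) ((g⁻¹ ^ n) x)) atTop atTop := by
  obtain ⟨t, ht, hlin⟩ := (isHyperbolicIsometry_iff g).1 hg x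
  have hsub := subadditive_dist_pow_apply g x
  have hbdd : BddBelow (Set.range fun n : ℕ => dist x ((g ^ n) x) / n) :=
    ⟨0, by rintro _ ⟨n, rfl⟩; positivity⟩
  have hpos : 0 < hsub.lim := ht.trans_le <| ge_of_tendsto (hsub.tendsto_lim hbdd) <| by
    filter_upwards [eventually_gt_atTop 0] with n hn
    rw [le_div_iff₀ (by exact_mod_cast hn)]
    exact hlin n
  obtain ⟨Q, hQ, hgrowth⟩ := ((eventually_gt_atTop 0).and
    ((hsub.tendsto_apply_two_mul_sub hbdd hpos).eventually_ge_atTop (4 * δ + 1))).exists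
  have hlarge :
      2 * gromovProduct x ((g ^ Q)⁻¹ x) ((g ^ Q) x) + 4 * δ + 1 ≤ dist x ((g ^ Q) x) := by
    rw [two_mul_gromovProduct_inv_apply, ← pow_mul, mul_comm Q 2]
    linarith
  intro htends
  obtain ⟨m, hm, hbig⟩ := ((eventually_gt_atTop 0).and
    ((htends.comp (tendsto_id.const_mul_atTop' hQ)).eventually_gt_atTop
      (gromovProduct x ((g ^ Q)⁻¹ x) ((g ^ Q) x) + 2 * δ))).exists
  have hbounded := gromovProduct_inv_pow_apply_le hX (g ^ Q) x hlarge hm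
  rw [← pow_mul, gromovProduct_comm, ← inv_pow] at hbounded
  exact lt_irrefl _ (hbig.trans_le hbounded)

section Boundary

variable {w : X} {u v z : ℕ → X}

theorem SeqEquiv.symm (h : SeqEquiv w u v) : SeqEquiv w v u := by
  have hswap : Tendsto (Prod.swap : ℕ × ℕ → ℕ × ℕ) atTop atTop := by
    simpa only [prod_atTop_atTop_eq] using
      tendsto_prod_swap (f := (atTop : Filter ℕ)) (g := atTop)
  exact (h.comp hswap).congr fun p => gromovProduct_comm w _ _

theorem SeqEquiv.trans {δ : ℝ} (hX : FourPointCondition X δ) (huv : SeqEquiv w u v)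
    (hvz : SeqEquiv w v z) : SeqEquiv w u z := by
  refine tendsto_atTop.2 fun M => ?_
  obtain ⟨N₁, hN₁⟩ := eventually_atTop_prod_self'.1 (huv.eventually_ge_atTop (M + δ))
  obtain ⟨N₂, hN₂⟩ := eventually_atTop_prod_self'.1 (hvz.eventually_ge_atTop (M + δ))
  refine eventually_atTop_prod_self'.2 ⟨max N₁ N₂, fun i hi k hk => ?_⟩
  have := hX.le_gromovProduct (hN₁ i (le_of_max_le_left hi) _ (le_max_left _ _))
    (hN₂ _ (le_max_right _ _) k (le_of_max_le_right hk))
  rwa [add_sub_cancel_right] at this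

theorem boundaryPt_eq_of_seqEquiv {a b : BoundarySeq w} (h : SeqEquiv w a.1 b.1) :
    boundaryPt w a = boundaryPt w b :=
  Quot.sound h

theorem boundaryPt_eq_iff {δ : ℝ} (hX : FourPointCondition X δ) {a b : BoundarySeq w} :
    boundaryPt w a = boundaryPt w b ↔ SeqEquiv w a.1 b.1 := by
  refine ⟨fun h => ?_, boundaryPt_eq_of_seqEquiv⟩
  have hequiv : Equivalence fun a b : BoundarySeq w => SeqEquiv w a.1 b.1 :=
    ⟨fun a => a.2, SeqEquiv.symm, SeqEquiv.trans hX⟩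
  exact hequiv.eqvGen_iff.1 (Quot.eqvGen_exact h)

theorem seqEquiv_of_dist_le {B : ℝ} (hu : ConvergesToInfinity w u)
    (h : ∀ n, dist (u n) (v n) ≤ B) : SeqEquiv w u v := by
  refine tendsto_atTop_mono (fun p => ?_) (tendsto_atTop_add_const_right _ (-B) hu)
  have := gromovProduct_le_add_dist w (u p.1) (u p.2) (u p.1) (v p.2)
  rw [dist_self] at this
  linarith [h p.2]

theorem ConvergesToInfinity.of_dist_le {B : ℝ} (hu : ConvergesToInfinity w u)
    (h : ∀ n, dist (u n) (v n) ≤ B) : ConvergesToInfinity w v := by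
  refine tendsto_atTop_mono (fun p => ?_) (tendsto_atTop_add_const_right _ (-2 * B) hu)
  linarith [gromovProduct_le_add_dist w (u p.1) (u p.2) (v p.1) (v p.2), h p.1, h p.2]

theorem exists_boundaryPt_eq_of_dist_le {B : ℝ} (a : BoundarySeq w)
    (h : ∀ n, dist (a.1 n) (v n) ≤ B) :
    ∃ hv : ConvergesToInfinity w v, boundaryPt w ⟨v, hv⟩ = boundaryPt w a :=
  ⟨a.2.of_dist_le h, (boundaryPt_eq_of_seqEquiv (seqEquiv_of_dist_le a.2 h)).symm⟩

theorem seqEquiv_of_frequently_le {δ : ℝ} (hX : FourPointCondition X δ)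
    (hu : ConvergesToInfinity w u) (hv : ConvergesToInfinity w v)
    (h : ∀ M, ∃ᶠ n in atTop, M ≤ gromovProduct w (u n) (v n)) : SeqEquiv w u v := by
  refine tendsto_atTop.2 fun M => ?_
  obtain ⟨N₁, hN₁⟩ := eventually_atTop_prod_self'.1 (hu.eventually_ge_atTop (M + δ))
  obtain ⟨N₂, hN₂⟩ := eventually_atTop_prod_self'.1 (hv.eventually_ge_atTop (M + 2 * δ))
  obtain ⟨n, hn, hnM⟩ := frequently_atTop.1 (h (M + 2 * δ)) (max N₁ N₂)
  refine eventually_atTop_prod_self'.2 ⟨max N₁ N₂, fun i hi j hj => ?_⟩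
  have hnj : M + δ ≤ gromovProduct w (u n) (v j) := by
    have := hX.le_gromovProduct hnM (hN₂ n (le_of_max_le_right hn) j (le_of_max_le_right hj))
    rwa [add_sub_assoc, two_mul, add_sub_cancel_right] at this
  have := hX.le_gromovProduct (hN₁ i (le_of_max_le_left hi) n (le_of_max_le_left hn)) hnj
  rwa [add_sub_cancel_right] at this

theorem boundaryMap_boundaryMap (e e' : X ≃ᵢ X) (a : GromovBoundary w) :
    boundaryMap w e (boundaryMap w e' a) = boundaryMap w (e * e') a := by
  induction a using Quot.ind
  rfl

theorem boundaryMap_one (a : GromovBoundary w) : boundaryMap w 1 a = a := by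
  induction a using Quot.ind
  rfl

theorem boundaryMap_injective (w : X) (f : X ≃ᵢ X) : Function.Injective (boundaryMap w f) :=
  Function.LeftInverse.injective (g := boundaryMap w f⁻¹) fun a => by
    rw [boundaryMap_boundaryMap, inv_mul_cancel, boundaryMap_one]

theorem IsAttractingFixedPt.exists_boundaryPt_eq {f : X ≃ᵢ X} {A : GromovBoundary w}
    (hA : IsAttractingFixedPt w f A) (y : X) :
    ∃ h : ConvergesToInfinity w (fun n : ℕ => (f ^ n) y), boundaryPt w ⟨_, h⟩ = A := by
  obtain ⟨x, hx, rfl⟩ := hA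
  refine exists_boundaryPt_eq_of_dist_le ⟨_, hx⟩ (B := dist x y) fun n => le_of_eq ?_
  show dist ((f ^ (n : ℤ)) x) ((f ^ n) y) = dist x y
  rw [zpow_natCast, (f ^ n).dist_eq]

theorem IsAttractingFixedPt.isFixedPt {f : X ≃ᵢ X} {A : GromovBoundary w}
    (hA : IsAttractingFixedPt w f A) : Function.IsFixedPt (boundaryMap w f) A := by
  obtain ⟨h, rfl⟩ := hA.exists_boundaryPt_eq w
  refine boundaryPt_eq_of_seqEquiv (seqEquiv_of_dist_le (B := dist (f w) w)
    (convergesToInfinity_isometry f h) fun n => le_of_eq ?_)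
  show dist (f ((f ^ n) w)) ((f ^ n) w) = dist (f w) w
  rw [← IsometryEquiv.mul_apply, (Commute.self_pow f n).eq, IsometryEquiv.mul_apply,
    (f ^ n).dist_eq]

theorem IsRepellingFixedPt.isFixedPt {f : X ≃ᵢ X} {A : GromovBoundary w}
    (hA : IsRepellingFixedPt w f A) : Function.IsFixedPt (boundaryMap w f) A := by
  have hinv : boundaryMap w f⁻¹ A = A := IsAttractingFixedPt.isFixedPt hA
  show boundaryMap w f A = A
  conv_lhs => rw [← hinv, boundaryMap_boundaryMap, mul_inv_cancel, boundaryMap_one]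

end Boundary

theorem Function.Injective.eq_of_apply_eq_of_isFixedPt {α : Type*} {F : α → α}
    (hF : Function.Injective F) {P a b : α} (hP : Function.IsFixedPt F P)
    (hPab : P ∈ ({a, b} : Set α)) (hab : F a = b) : a = b := by
  rcases hPab with rfl | rfl
  · exact hP.symm.trans hab
  · exact hF (hab.trans hP.symm)

theorem IsHyperbolicIsometry.attractingFixedPt_ne_repellingFixedPt {δ : ℝ}
    (hX : FourPointCondition X δ) {w : X} {g : X ≃ᵢ X} (hg : IsHyperbolicIsometry g)
    {A A' : GromovBoundary w} (hA : IsAttractingFixedPt w g A) (hA' : IsRepellingFixedPt w g A') :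
    A ≠ A' := by
  obtain ⟨hu, rfl⟩ := hA.exists_boundaryPt_eq w
  obtain ⟨hv, rfl⟩ := IsAttractingFixedPt.exists_boundaryPt_eq hA' w
  intro h
  have hdiag := ((boundaryPt_eq_iff hX).1 h).comp tendsto_atTop_diagonal
  exact hg.not_tendsto_gromovProduct_pow_inv_pow hX w
    (by simpa only [Function.comp_def] using hdiag)

theorem exists_eventually_gromovProduct_mul_pow_le {δ : ℝ} (hX : FourPointCondition X δ)
    {w : X} {f g : X ≃ᵢ X} {B B' : GromovBoundary w} (hB : IsAttractingFixedPt w g B)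
    (hB' : IsRepellingFixedPt w g B') (hfB : boundaryMap w f B ≠ B') :
    ∃ C, ∀ᶠ n in atTop, gromovProduct w ((f * g ^ n)⁻¹ w) ((f * g ^ n) w) ≤ C := by
  obtain ⟨hu, rfl⟩ := hB.exists_boundaryPt_eq w
  obtain ⟨hv, rfl⟩ := IsAttractingFixedPt.exists_boundaryPt_eq hB' (f⁻¹ w)
  by_contra! hC
  refine hfB (boundaryPt_eq_of_seqEquiv (seqEquiv_of_frequently_le hX
    (convergesToInfinity_isometry f hu) hv fun M => (hC M).mono fun n hn => ?_))
  rw [gromovProduct_comm, mul_inv_rev, IsometryEquiv.mul_apply, ← inv_pow] at hn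
  exact hn.le

theorem IsHyperbolicIsometry.tendsto_dist_mul_pow_apply {g : X ≃ᵢ X}
    (hg : IsHyperbolicIsometry g) (f : X ≃ᵢ X) (x : X) :
    Tendsto (fun n : ℕ => dist x ((f * g ^ n) x)) atTop atTop := by
  obtain ⟨t, ht, hlin⟩ := (isHyperbolicIsometry_iff g).1 hg x
  refine tendsto_atTop_mono (fun n => ?_) (tendsto_atTop_add_const_right _ (-dist x (f⁻¹ x))
    (tendsto_natCast_atTop_atTop.const_mul_atTop ht))
  have hmove : dist x ((f * g ^ n) x) = dist (f⁻¹ x) ((g ^ n) x) := by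
    rw [← f⁻¹.dist_eq, IsometryEquiv.mul_apply, IsometryEquiv.inv_apply_self]
  have := dist_triangle x (f⁻¹ x) ((g ^ n) x)
  linarith [hlin n]

theorem dependent_hyperbolic_comp_power_general (δ : ℝ) (hX : IsDeltaHyperbolic X δ) (w : X)
    (f g : X ≃ᵢ X) (hg : IsHyperbolicIsometry g)
    (Aplus Aminus Bplus Bminus : GromovBoundary w)
    (hAp : IsAttractingFixedPt w f Aplus) (hAm : IsRepellingFixedPt w f Aminus)
    (hBp : IsAttractingFixedPt w g Bplus) (hBm : IsRepellingFixedPt w g Bminus)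
    (hdep : (({Aplus, Aminus} : Set (GromovBoundary w)) ∩ {Bplus, Bminus}).Nonempty) :
    ∃ N : ℕ, ∀ n : ℕ, N ≤ n → IsHyperbolicIsometry (f * g ^ n) := by
  have hfour := hX.fourPointCondition
  have hfB : boundaryMap w f Bplus ≠ Bminus := by
    obtain ⟨P, hPA, hPB⟩ := hdep
    have hP : Function.IsFixedPt (boundaryMap w f) P := by
      rcases hPA with rfl | rfl
      exacts [hAp.isFixedPt, hAm.isFixedPt]
    exact fun h => hg.attractingFixedPt_ne_repellingFixedPt hfour hBp hBm
      ((boundaryMap_injective w f).eq_of_apply_eq_of_isFixedPt hP hPB h)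
  obtain ⟨C, hC⟩ := exists_eventually_gromovProduct_mul_pow_le hfour hBp hBm hfB
  obtain ⟨N, hN⟩ := eventually_atTop.1 <| hC.and <|
    (hg.tendsto_dist_mul_pow_apply f w).eventually_ge_atTop (2 * C + 4 * δ + 1)
  exact ⟨N, fun n hn => isHyperbolicIsometry_of_two_mul_gromovProduct_le hfour _ w
    (by linarith [hN n hn])⟩

/-- If `f` and `g` are dependent hyperbolic isometries of a
`δ`-hyperbolic space (their fixed-point pairs on `∂X` intersect), then there is
`N ≥ 0` such that `f gⁿ` is hyperbolic for all `n ≥ N`. -/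
theorem dependent_hyperbolic_comp_power (δ : ℝ) (hX : IsDeltaHyperbolic X δ) (w : X)
    (f g : X ≃ᵢ X) (hf : IsHyperbolicIsometry f) (hg : IsHyperbolicIsometry g)
    (Aplus Aminus Bplus Bminus : GromovBoundary w)
    (hAp : IsAttractingFixedPt w f Aplus) (hAm : IsRepellingFixedPt w f Aminus)
    (hBp : IsAttractingFixedPt w g Bplus) (hBm : IsRepellingFixedPt w g Bminus)
    (hdep : (({Aplus, Aminus} : Set (GromovBoundary w)) ∩ {Bplus, Bminus}).Nonempty) :
    ∃ N : ℕ, ∀ n : ℕ, N ≤ n → IsHyperbolicIsometry (f * g ^ n) :=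
  dependent_hyperbolic_comp_power_general δ hX w f g hg Aplus Aminus Bplus Bminus hAp hAm hBp hBm
    hdep
end
end

section
/- Let X be a metric space, let f be an isometry of X, let x ∈ X, and suppose there is τ ≥ 1 such that (1/τ)|m−n| ≤ d(f^m x, f^n x) for all m,n ∈ ℤ. Set A = { f^n x : n ∈ ℤ }. Then for every z ∈ X the set π_z = { x' ∈ A : d(x',z) = inf_{a ∈ A} d(a,z) } is nonempty and finite. -/
open Filter Metric Set

noncomputable section

universe u

variable {X : Type u} [MetricSpace X]

/-- If the orbit `A = {fⁿ x}` of an isometry `f` satisfies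
`(1/τ)|m−n| ≤ d(f^m x, f^n x)`, then for every `z` the set `π_z` of points of `A`
nearest to `z` is nonempty and finite. -/
theorem nearest_orbit_points_nonempty_finite (f : X ≃ᵢ X) (x : X)
    (τ : ℝ) (hτ : 1 ≤ τ)
    (h : ∀ m n : ℤ, (1 / τ) * |(m : ℝ) - (n : ℝ)| ≤ dist ((f ^ m) x) ((f ^ n) x)) :
    ∀ z : X,
      ({a : X | (∃ k : ℤ, a = (f ^ k) x) ∧
        dist a z = sInf {d : ℝ | ∃ k : ℤ, d = dist ((f ^ k) x) z}}).Nonempty ∧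
      ({a : X | (∃ k : ℤ, a = (f ^ k) x) ∧
        dist a z = sInf {d : ℝ | ∃ k : ℤ, d = dist ((f ^ k) x) z}}).Finite := by
  intro z
  have hτ0 : (0:ℝ) < τ := lt_of_lt_of_le one_pos hτ
  set D := {d : ℝ | ∃ k : ℤ, d = dist ((f ^ k) x) z} with hD
  have hx0 : (f ^ (0:ℤ)) x = x := by simp
  have hmem : ∀ k : ℤ, dist ((f ^ k) x) z ∈ D := fun k => ⟨k, rfl⟩
  have hDbdd : BddBelow D := ⟨0, by rintro d ⟨k, rfl⟩; exact dist_nonneg⟩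
  have hm_le : ∀ k : ℤ, sInf D ≤ dist ((f ^ k) x) z := fun k => csInf_le hDbdd (hmem k)
  have hkey : ∀ k : ℤ, |(k:ℝ)| / τ - dist x z ≤ dist ((f ^ k) x) z := by
    intro k
    have h1 := h k 0
    rw [hx0] at h1
    simp only [Int.cast_zero, sub_zero] at h1
    have h2 : dist ((f ^ k) x) x ≤ dist ((f ^ k) x) z + dist z x := dist_triangle _ _ _
    have : |(k:ℝ)| / τ = (1/τ) * |(k:ℝ)| := by ring
    rw [this, dist_comm z x] at *
    linarith
  set N : ℤ := ⌈τ * (2 * dist x z + 1)⌉ with hN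
  have hBpos : (0:ℝ) < τ * (2 * dist x z + 1) := by positivity
  have hN0 : 0 ≤ N := by
    have := Int.le_ceil (τ * (2 * dist x z + 1))
    exact_mod_cast le_of_lt (lt_of_lt_of_le hBpos this)
  have hfar : ∀ k : ℤ, ¬ |k| ≤ N → dist x z + 1 < dist ((f ^ k) x) z := by
    intro k hk
    push_neg at hk
    have h1 : (N:ℝ) + 1 ≤ (|k| : ℤ) := by exact_mod_cast hk
    have h2 : τ * (2 * dist x z + 1) < ((|k| : ℤ) : ℝ) := by
      have := Int.le_ceil (τ * (2 * dist x z + 1))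
      push_cast at h1 ⊢
      linarith
    have h3 : ((|k| : ℤ) : ℝ) = |(k:ℝ)| := by push_cast; ring
    have h4 := hkey k
    rw [h3] at h2
    have h5 : 2 * dist x z + 1 < |(k:ℝ)| / τ := by
      rw [lt_div_iff₀ hτ0]; linarith [mul_comm τ (2 * dist x z + 1)]
    linarith
  -- nonempty
  have hKne : (0:ℤ) ∈ Finset.Icc (-N) N := by
    simp [Finset.mem_Icc]; omega
  obtain ⟨k₀, hk₀K, hk₀min⟩ := Finset.exists_min_image (Finset.Icc (-N) N)
    (fun k => dist ((f ^ k) x) z) ⟨0, hKne⟩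
  have hk₀le : dist ((f ^ k₀) x) z ≤ dist x z := by
    have := hk₀min 0 hKne
    rwa [hx0] at this
  have hmin : dist ((f ^ k₀) x) z = sInf D := by
    refine le_antisymm (le_csInf ⟨_, hmem 0⟩ ?_) (hm_le k₀)
    rintro d ⟨k, rfl⟩
    by_cases hk : |k| ≤ N
    · exact hk₀min k (Finset.mem_Icc.mpr (abs_le.mp hk))
    · have := hfar k hk
      linarith
  have hsub : {a : X | (∃ k : ℤ, a = (f ^ k) x) ∧ dist a z = sInf D} ⊆
      (fun k : ℤ => (f ^ k) x) '' (Set.Icc (-N) N) := by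
    rintro a ⟨⟨k, rfl⟩, hdist⟩
    refine ⟨k, ?_, rfl⟩
    by_contra hk
    have hk' : ¬ |k| ≤ N := fun hle => hk (Set.mem_Icc.mpr (abs_le.mp hle))
    have h1 := hfar k hk'
    have h2 : sInf D ≤ dist x z := by
      have := hm_le 0; rwa [hx0] at this
    rw [hdist] at h1
    linarith
  exact ⟨⟨(f ^ k₀) x, ⟨k₀, rfl⟩, hmin⟩,
    Set.Finite.subset ((Set.finite_Icc (-N) N).image _) hsub⟩
end
end

section
/- Let X be a metric space, let f be an isometry of X, and let N ≥ 1 be an integer. If f^N is a hyperbolic isometry, then f is a hyperbolic isometry. -/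
open Filter Metric Set

noncomputable section

universe u

variable {X : Type u} [MetricSpace X]

/-- If `f^N` is a hyperbolic isometry for some `N ≥ 1`, then so is `f`. -/
theorem hyperbolic_of_pow (f : X ≃ᵢ X) (N : ℕ) (hN : 1 ≤ N)
    (h : IsHyperbolicIsometry (f ^ N)) : IsHyperbolicIsometry f := by
  intro x
  obtain ⟨t, ht, H⟩ := h x
  have hN0 : (0:ℝ) < N := by exact_mod_cast hN
  refine ⟨t / N, div_pos ht hN0, ?_⟩
  -- subadditivity: dist (f^(j*m) x) x ≤ j * dist (f^m x) x
  have keyB : ∀ (j : ℕ) (m : ℤ), dist ((f ^ ((j:ℤ) * m)) x) x ≤ j * dist ((f ^ m) x) x := by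
    intro j m
    induction j with
    | zero => simp
    | succ j ih =>
      have hsplit : ((j:ℤ) + 1) * m = m + (j:ℤ) * m := by ring
      have hmul : f ^ (((j:ℤ) + 1) * m) = f ^ m * f ^ ((j:ℤ) * m) := by
        rw [hsplit, zpow_add]
      have happ : (f ^ (((j:ℤ) + 1) * m)) x = (f ^ m) ((f ^ ((j:ℤ) * m)) x) := by
        rw [hmul]; rfl
      have htri : dist ((f ^ (((j:ℤ) + 1) * m)) x) x ≤
          dist ((f ^ m) ((f ^ ((j:ℤ) * m)) x)) ((f ^ m) x) + dist ((f ^ m) x) x := by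
        rw [happ]; exact dist_triangle _ _ _
      have hisom : dist ((f ^ m) ((f ^ ((j:ℤ) * m)) x)) ((f ^ m) x)
          = dist ((f ^ ((j:ℤ) * m)) x) x := (f ^ m).dist_eq _ _
      push_cast
      rw [hisom] at htri
      push_cast at htri
      linarith
  -- lower bound from hyperbolicity of f^N
  have keyA : ∀ m : ℤ, t * |(m:ℝ)| ≤ dist ((f ^ ((N:ℤ) * m)) x) x := by
    intro m
    have := H m 0
    simp only [Int.cast_zero, sub_zero, zpow_zero] at this
    have hpow : ((f ^ N) ^ m) = f ^ ((N:ℤ) * m) := by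
      rw [← zpow_natCast f N, ← zpow_mul]
    rw [hpow] at this
    simpa using this
  intro m n
  -- reduce to distance from x
  have hred : dist ((f ^ m) x) ((f ^ n) x) = dist ((f ^ (m - n)) x) x := by
    have := (f ^ (-n)).dist_eq ((f ^ m) x) ((f ^ n) x)
    have h1 : (f ^ (-n)) ((f ^ m) x) = (f ^ (m - n)) x := by
      have : f ^ (m - n) = f ^ (-n) * f ^ m := by
        rw [← zpow_add]; ring_nf
      rw [this]; rfl
    have h2 : (f ^ (-n)) ((f ^ n) x) = x := by
      have : f ^ (-n) * f ^ n = (1 : X ≃ᵢ X) := by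
        rw [← zpow_add]; simp
      have := congrArg (fun g : X ≃ᵢ X => g x) this
      simpa using this
    rw [h1, h2] at this
    linarith
  rw [hred]
  have hA := keyA (m - n)
  have hB := keyB N (m - n)
  have hNN : ((N:ℤ) : ℝ) * (m - n : ℤ) = (N:ℝ) * ((m:ℝ) - (n:ℝ)) := by push_cast; ring
  have hcast : ((m - n : ℤ) : ℝ) = (m:ℝ) - (n:ℝ) := by push_cast; ring
  rw [hcast] at hA
  have : t * |(m:ℝ) - (n:ℝ)| ≤ (N:ℝ) * dist ((f ^ (m - n)) x) x := le_trans hA hB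
  rw [div_mul_eq_mul_div, div_le_iff₀ hN0]
  linarith
end
end
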